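/- Let M be a compact metrizable topological space. The space E of topological embeddings of M into ℝ^ℕ (the countable product of copies of ℝ with the product topology), topologized as the subspace of the space of continuous maps C(M, ℝ^ℕ) with the compact-open topology consisting of those maps that are topological embeddings, is a contractible topological space. -/

import Mathlib

open Topology

noncomputable section ContractEmbAux

/-- Spread a sequence into the even coordinates. -/
def sevAux (y : ℕ → ℝ) (k : ℕ) : ℝ := if Even k then y (k / 2) else 0

/-- Spread a sequence into the odd coordinates. -/
def sodAux (y : ℕ → ℝ) (k : ℕ) : ℝ := if Even k then 0 else y (k / 2)

lemma sevAux_two_mul (y : ℕ → ℝ) (n : ℕ) : sevAux y (2 * n) = y n := by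
  have h : Even (2 * n) := even_two_mul n
  simp only [sevAux, if_pos h]
  congr 1
  omega

lemma sevAux_odd (y : ℕ → ℝ) (n : ℕ) : sevAux y (2 * n + 1) = 0 := by
  have h : ¬ Even (2 * n + 1) := by simp [Nat.even_add_one, parity_simps]
  simp [sevAux, h]

lemma sodAux_two_mul (y : ℕ → ℝ) (n : ℕ) : sodAux y (2 * n) = 0 := by
  have h : Even (2 * n) := even_two_mul n
  simp [sodAux, h]

lemma sodAux_odd (y : ℕ → ℝ) (n : ℕ) : sodAux y (2 * n + 1) = y n := by
  have h : ¬ Even (2 * n + 1) := by simp [Nat.even_add_one, parity_simps]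
  simp only [sodAux, if_neg h]
  congr 1
  omega

lemma sevAux_continuous {X : Type*} [TopologicalSpace X] {g : X → ℕ → ℝ}
    (hg : Continuous g) : Continuous fun x => sevAux (g x) := by
  refine continuous_pi fun k => ?_
  by_cases h : Even k <;> simp only [sevAux, if_pos, if_neg, h, if_true, if_false]
  · exact (continuous_apply _).comp hg
  · exact continuous_const

lemma sodAux_continuous {X : Type*} [TopologicalSpace X] {g : X → ℕ → ℝ}
    (hg : Continuous g) : Continuous fun x => sodAux (g x) := by
  refine continuous_pi fun k => ?_
  by_cases h : Even k <;> simp only [sodAux, if_pos, if_neg, h, if_true, if_false]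
  · exact continuous_const
  · exact (continuous_apply _).comp hg

/-- The linear isotopy from the identity to `sevAux` is injective at each time. -/
lemma injAux1 {u : ℝ} (h0 : 0 ≤ u) (h1 : u ≤ 1) :
    Function.Injective (fun y : ℕ → ℝ => fun k => (1 - u) * y k + u * sevAux y k) := by
  rcases eq_or_lt_of_le h1 with rfl | hu
  · intro y y' h
    funext n
    have h2 := congrFun h (2 * n)
    simpa [sevAux_two_mul] using h2
  · have hne : (1 : ℝ) - u ≠ 0 := ne_of_gt (by linarith)
    intro y y' h
    funext k
    induction k using Nat.strong_induction_on with
    | _ k ih =>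
      have hk := congrFun h k
      by_cases hke : Even k
      · simp only [sevAux, if_pos hke] at hk
        rcases Nat.eq_zero_or_pos k with rfl | hkpos
        · simp only [Nat.zero_div] at hk
          linear_combination hk
        · have h2 : y (k / 2) = y' (k / 2) := ih (k / 2) (by omega)
          rw [h2] at hk
          exact mul_left_cancel₀ hne (by linarith)
      · simp only [sevAux, if_neg hke, mul_zero, add_zero] at hk
        exact mul_left_cancel₀ hne hk

/-- The straight-line homotopy from `sevAux ∘ f` to `sodAux ∘ e` is injective at each time,
provided `f` and `e` are injective. -/
lemma injAux2 {M : Type*} {t : ℝ} (h0 : 0 ≤ t) (h1 : t ≤ 1) {f e : M → ℕ → ℝ}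
    (hf : Function.Injective f) (he : Function.Injective e) :
    Function.Injective (fun x => fun k => (1 - t) * sevAux (f x) k + t * sodAux (e x) k) := by
  rcases eq_or_lt_of_le h1 with rfl | ht
  · intro x x' h
    refine he (funext fun n => ?_)
    have h2 := congrFun h (2 * n + 1)
    simpa [sevAux_odd, sodAux_odd] using h2
  · have hne : (1 : ℝ) - t ≠ 0 := ne_of_gt (by linarith)
    intro x x' h
    refine hf (funext fun n => ?_)
    have h2 := congrFun h (2 * n)
    simp only [sevAux_two_mul, sodAux_two_mul, mul_zero, add_zero] at h2
    exact mul_left_cancel₀ hne h2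

end ContractEmbAux

/-- For a compact metrizable space `M`, the space of topological embeddings of `M` into
`ℝ^ℕ`, as a subspace of the space `C(M, ℝ^ℕ)` of continuous maps with the compact-open
topology, is contractible. -/
theorem contractible_embeddings_into_RN
    {M : Type*} [TopologicalSpace M] [CompactSpace M] [TopologicalSpace.MetrizableSpace M] :
    ContractibleSpace {f : C(M, ℕ → ℝ) // Topology.IsEmbedding f} := by
  letI := TopologicalSpace.metrizableSpaceMetric M
  -- a fixed embedding of `M` into `ℝ^ℕ`
  obtain ⟨e, he⟩ : ∃ e : M → (ℕ → ℝ), IsEmbedding e := by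
    obtain ⟨f, hf⟩ := TopologicalSpace.exists_embedding_l_infty M
    have hc : Continuous fun x => (f x : ℕ → ℝ) := continuous_pi fun n =>
      (continuous_eval_const (F := BoundedContinuousFunction ℕ ℝ) n).comp hf.continuous
    exact ⟨fun x => (f x : ℕ → ℝ), (hc.isClosedEmbedding
      (fun a b h => hf.injective (BoundedContinuousFunction.ext fun n => congrFun h n))).isEmbedding⟩
  set E := {f : C(M, ℕ → ℝ) // Topology.IsEmbedding f} with hE
  -- injective continuous maps of `M` into a T2 space are embeddings
  have emb_of_inj : ∀ (g : C(M, ℕ → ℝ)), Function.Injective g → IsEmbedding g :=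
    fun g hg => (g.continuous.isClosedEmbedding hg).isEmbedding
  -- evaluation is continuous
  have hev : Continuous fun p : (unitInterval × E) × M => (p.1.2 : C(M, ℕ → ℝ)) p.2 :=
    ContinuousEval.continuous_eval.comp
      ((continuous_subtype_val.comp (continuous_snd.comp continuous_fst)).prodMk continuous_snd)
  have hevE : Continuous fun p : E × M => (p.1 : C(M, ℕ → ℝ)) p.2 :=
    ContinuousEval.continuous_eval.comp
      ((continuous_subtype_val.comp continuous_fst).prodMk continuous_snd)
  -- the "middle" map, pushing an embedding into the even coordinates
  have mmem : ∀ f : E, IsEmbedding (fun x => sevAux ((f : C(M, ℕ → ℝ)) x)) := by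
    intro f
    have hinj : Function.Injective (fun x => sevAux ((f : C(M, ℕ → ℝ)) x)) := by
      intro x x' h
      refine f.2.injective (funext fun n => ?_)
      have h2 := congrFun h (2 * n)
      simpa [sevAux_two_mul] using h2
    exact ((sevAux_continuous (f : C(M, ℕ → ℝ)).continuous).isClosedEmbedding hinj).isEmbedding
  let mC : C(E, E) :=
    { toFun := fun f => ⟨⟨fun x => sevAux ((f : C(M, ℕ → ℝ)) x),
        sevAux_continuous (f : C(M, ℕ → ℝ)).continuous⟩, mmem f⟩
      continuous_toFun := by
        refine Continuous.subtype_mk ?_ _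
        refine ContinuousMap.continuous_of_continuous_uncurry _ ?_
        exact sevAux_continuous hevE }
  -- the target point : the fixed embedding in the odd coordinates
  have cmem : IsEmbedding (fun x => sodAux (e x)) := by
    have hinj : Function.Injective (fun x => sodAux (e x)) := by
      intro x x' h
      refine he.injective (funext fun n => ?_)
      have h2 := congrFun h (2 * n + 1)
      simpa [sodAux_odd] using h2
    exact ((sodAux_continuous he.continuous).isClosedEmbedding hinj).isEmbedding
  let c : E := ⟨⟨fun x => sodAux (e x), sodAux_continuous he.continuous⟩, cmem⟩
  -- first homotopy: from the identity to `mC`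
  let H1 : (ContinuousMap.id E).Homotopy mC :=
    { toFun := fun p =>
        ⟨⟨fun x => fun k => (1 - (p.1 : ℝ)) * (p.2 : C(M, ℕ → ℝ)) x k +
            (p.1 : ℝ) * sevAux ((p.2 : C(M, ℕ → ℝ)) x) k,
          continuous_pi fun k => (continuous_const.mul
              ((continuous_apply k).comp (p.2 : C(M, ℕ → ℝ)).continuous)).add
            (continuous_const.mul ((continuous_apply k).comp
              (sevAux_continuous (p.2 : C(M, ℕ → ℝ)).continuous)))⟩,
          emb_of_inj _ ((injAux1 p.1.2.1 p.1.2.2).comp p.2.2.injective)⟩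
      continuous_toFun := by
        refine Continuous.subtype_mk ?_ _
        refine ContinuousMap.continuous_of_continuous_uncurry _ ?_
        refine continuous_pi fun k => Continuous.add ?_ ?_
        · refine Continuous.mul ?_ ((continuous_apply k).comp hev)
          exact continuous_const.sub
            (continuous_subtype_val.comp (continuous_fst.comp continuous_fst))
        · exact (continuous_subtype_val.comp (continuous_fst.comp continuous_fst)).mul
            ((continuous_apply k).comp (sevAux_continuous hev))
      map_zero_left := by
        intro f
        refine Subtype.ext (ContinuousMap.ext fun x => funext fun k => ?_)
        simp
      map_one_left := by
        intro f
        refine Subtype.ext (ContinuousMap.ext fun x => funext fun k => ?_)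
        simp [mC] }
  -- second homotopy: from `mC` to the constant map at `c`
  let H2 : mC.Homotopy (ContinuousMap.const E c) :=
    { toFun := fun p =>
        ⟨⟨fun x => fun k => (1 - (p.1 : ℝ)) * sevAux ((p.2 : C(M, ℕ → ℝ)) x) k +
            (p.1 : ℝ) * sodAux (e x) k,
          continuous_pi fun k => (continuous_const.mul ((continuous_apply k).comp
              (sevAux_continuous (p.2 : C(M, ℕ → ℝ)).continuous))).add
            (continuous_const.mul
              ((continuous_apply k).comp (sodAux_continuous he.continuous)))⟩,
          emb_of_inj _ (injAux2 p.1.2.1 p.1.2.2 p.2.2.injective he.injective)⟩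
      continuous_toFun := by
        refine Continuous.subtype_mk ?_ _
        refine ContinuousMap.continuous_of_continuous_uncurry _ ?_
        refine continuous_pi fun k => Continuous.add ?_ ?_
        · refine Continuous.mul ?_ ((continuous_apply k).comp (sevAux_continuous hev))
          exact continuous_const.sub
            (continuous_subtype_val.comp (continuous_fst.comp continuous_fst))
        · exact (continuous_subtype_val.comp (continuous_fst.comp continuous_fst)).mul
            (((continuous_apply k).comp (sodAux_continuous he.continuous)).comp continuous_snd)
      map_zero_left := by
        intro f
        refine Subtype.ext (ContinuousMap.ext fun x => funext fun k => ?_)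
        simp [mC]
      map_one_left := by
        intro f
        refine Subtype.ext (ContinuousMap.ext fun x => funext fun k => ?_)
        simp [c] }
  exact (contractible_iff_id_nullhomotopic E).2 ⟨c, ⟨H1.trans H2⟩⟩
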